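/- Suppose W_1,…,W_L are d×d real matrices that are block-decomposed by orthogonal matrices U_1,…,U_L, V_1,…,V_L with data W̃_1,…,W̃_L and ρ_1,…,ρ_L as in the context. Then for all 1 ≤ i ≤ j ≤ L: W_j·W_{j−1}⋯W_i = U_{j,1}·(W̃_j·W̃_{j−1}⋯W̃_i)·V_{i,1}ᵀ + (∏_{k=i}^{j} ρ_k)·U_{j,2}·V_{i,2}ᵀ. -/
import Mathlib


open Matrix BigOperators Filter

noncomputable section

/-- Auxiliary: product of `k` consecutive matrices ending (on the right) at index `i`. -/
def chainAux {n : Type*} [Fintype n] [DecidableEq n]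
    (W : ℕ → Matrix n n ℝ) (i : ℕ) : ℕ → Matrix n n ℝ
  | 0 => 1
  | (k+1) => W (i + k) * chainAux W i k

/-- `chain W i j = W j * W (j-1) * ⋯ * W i`; equals `1` when `j < i` (empty product). -/
def chain {n : Type*} [Fintype n] [DecidableEq n]
    (W : ℕ → Matrix n n ℝ) (i j : ℕ) : Matrix n n ℝ :=
  chainAux W i (j + 1 - i)

/-- `blockDiag r m A B` is the `(2r+m)×(2r+m)` block-diagonal matrix `diag(A, B)`
with top-left block `A` (of size `2r×2r`) and bottom-right block `B` (of size `m×m`). -/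
def blockDiag (r m : ℕ) (A : Matrix (Fin (2*r)) (Fin (2*r)) ℝ)
    (B : Matrix (Fin m) (Fin m) ℝ) : Matrix (Fin (2*r + m)) (Fin (2*r + m)) ℝ :=
  Matrix.reindex finSumFinEquiv finSumFinEquiv (Matrix.fromBlocks A 0 0 B)

/-- The `d×2r` matrix formed by the first `2r` columns of a `(2r+m)×(2r+m)` matrix. -/
def cols1 (r m : ℕ) (U : Matrix (Fin (2*r + m)) (Fin (2*r + m)) ℝ) :
    Matrix (Fin (2*r + m)) (Fin (2*r)) ℝ :=
  fun i j => U i (Fin.castAdd m j)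

/-- The `d×m` matrix formed by the last `m` columns of a `(2r+m)×(2r+m)` matrix. -/
def cols2 (r m : ℕ) (U : Matrix (Fin (2*r + m)) (Fin (2*r + m)) ℝ) :
    Matrix (Fin (2*r + m)) (Fin m) ℝ :=
  fun i j => U i (Fin.natAdd (2*r) j)

/-- Squared Frobenius norm: `‖A‖_F² = trace(AᵀA)`. -/
def frobSq {p q : Type*} [Fintype p] [Fintype q] (A : Matrix p q ℝ) : ℝ :=
  Matrix.trace (Aᵀ * A)

/-- Frobenius norm: `‖A‖_F = √(trace(AᵀA))`. -/
def frobNorm {p q : Type*} [Fintype p] [Fintype q] (A : Matrix p q ℝ) : ℝ :=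
  Real.sqrt (Matrix.trace (Aᵀ * A))

/-! ### Auxiliary lemmas -/

lemma chain_self {n : Type*} [Fintype n] [DecidableEq n]
    (W : ℕ → Matrix n n ℝ) (i : ℕ) : chain W i i = W i := by
  have h : i + 1 - i = 1 := by omega
  rw [chain, h]
  show W (i + 0) * chainAux W i 0 = W i
  simp [chainAux]

lemma chain_succ {n : Type*} [Fintype n] [DecidableEq n]
    (W : ℕ → Matrix n n ℝ) (i j : ℕ) (h : i ≤ j + 1) :
    chain W i (j+1) = W (j+1) * chain W i j := by
  have h1 : j + 1 + 1 - i = (j + 1 - i) + 1 := by omega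
  rw [chain, h1]
  show W (i + (j + 1 - i)) * chainAux W i (j + 1 - i) = _
  have h2 : i + (j + 1 - i) = j + 1 := by omega
  rw [h2, chain]

/-- First-columns selector matrix. -/
def Jone (r m : ℕ) : Matrix (Fin (2*r + m)) (Fin (2*r)) ℝ :=
  fun i j => if i = Fin.castAdd m j then 1 else 0

/-- Last-columns selector matrix. -/
def Jtwo (r m : ℕ) : Matrix (Fin (2*r + m)) (Fin m) ℝ :=
  fun i j => if i = Fin.natAdd (2*r) j then 1 else 0

lemma cols1_eq (r m : ℕ) (U : Matrix (Fin (2*r+m)) (Fin (2*r+m)) ℝ) :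
    cols1 r m U = U * Jone r m := by
  ext i j
  simp [cols1, Jone, Matrix.mul_apply]

lemma cols2_eq (r m : ℕ) (U : Matrix (Fin (2*r+m)) (Fin (2*r+m)) ℝ) :
    cols2 r m U = U * Jtwo r m := by
  ext i j
  simp [cols2, Jtwo, Matrix.mul_apply]

lemma cne {p q : ℕ} (a : Fin p) (b : Fin q) : Fin.castAdd q a ≠ Fin.natAdd p b := by
  intro hc; have := Fin.ext_iff.mp hc; simp at this; omega

lemma nce {p q : ℕ} (a : Fin p) (b : Fin q) : Fin.natAdd p b ≠ Fin.castAdd q a :=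
  (cne a b).symm

lemma natAdd_inj_iff {p q : ℕ} {a b : Fin q} : Fin.natAdd p a = Fin.natAdd p b ↔ a = b := by
  constructor
  · intro hc
    have := Fin.ext_iff.mp hc
    simp only [Fin.coe_natAdd] at this
    exact Fin.ext (by omega)
  · rintro rfl; rfl

lemma J1tJ1 (r m : ℕ) : (Jone r m)ᵀ * Jone r m = 1 := by
  ext a b
  simp only [Jone, Matrix.mul_apply, Matrix.transpose_apply, Matrix.one_apply,
    ite_mul, one_mul, zero_mul, Finset.sum_ite_eq', Finset.mem_univ, if_true]
  rcases eq_or_ne a b with rfl | h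
  · simp
  · have h2 : Fin.castAdd m a ≠ Fin.castAdd m b := by
      simpa [Fin.ext_iff] using fun hc => h (Fin.ext hc)
    simp [h, h2]

lemma J2tJ2 (r m : ℕ) : (Jtwo r m)ᵀ * Jtwo r m = 1 := by
  ext a b
  simp only [Jtwo, Matrix.mul_apply, Matrix.transpose_apply, Matrix.one_apply,
    ite_mul, one_mul, zero_mul, Finset.sum_ite_eq', Finset.mem_univ, if_true]
  rcases eq_or_ne a b with rfl | h
  · simp
  · have h2 : Fin.natAdd (2*r) a ≠ Fin.natAdd (2*r) b := fun hc => h (natAdd_inj_iff.mp hc)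
    simp [h, h2]

lemma J1tJ2 (r m : ℕ) : (Jone r m)ᵀ * Jtwo r m = 0 := by
  ext a b
  simp only [Jone, Jtwo, Matrix.mul_apply, Matrix.transpose_apply, Matrix.zero_apply,
    ite_mul, one_mul, zero_mul, Finset.sum_ite_eq', Finset.mem_univ, if_true]
  simp [cne a b]

lemma J2tJ1 (r m : ℕ) : (Jtwo r m)ᵀ * Jone r m = 0 := by
  ext a b
  simp only [Jone, Jtwo, Matrix.mul_apply, Matrix.transpose_apply, Matrix.zero_apply,
    ite_mul, one_mul, zero_mul, Finset.sum_ite_eq', Finset.mem_univ, if_true]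
  simp [nce b a]

lemma blockDiag_eq (r m : ℕ) (A : Matrix (Fin (2*r)) (Fin (2*r)) ℝ)
    (B : Matrix (Fin m) (Fin m) ℝ) :
    blockDiag r m A B = Jone r m * A * (Jone r m)ᵀ + Jtwo r m * B * (Jtwo r m)ᵀ := by
  ext i j
  induction i using Fin.addCases with
  | left a =>
    induction j using Fin.addCases with
    | left b =>
      simp [_root_.blockDiag, Jone, Jtwo, Matrix.mul_apply, Matrix.add_apply, ite_mul, one_mul,
        zero_mul, mul_ite, mul_one, mul_zero, Finset.sum_ite_eq', cne, nce, natAdd_inj_iff]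
    | right b =>
      simp [_root_.blockDiag, Jone, Jtwo, Matrix.mul_apply, Matrix.add_apply, ite_mul, one_mul,
        zero_mul, mul_ite, mul_one, mul_zero, Finset.sum_ite_eq', cne, nce, natAdd_inj_iff]
  | right a =>
    induction j using Fin.addCases with
    | left b =>
      simp [_root_.blockDiag, Jone, Jtwo, Matrix.mul_apply, Matrix.add_apply, ite_mul, one_mul,
        zero_mul, mul_ite, mul_one, mul_zero, Finset.sum_ite_eq', cne, nce, natAdd_inj_iff]
    | right b =>
      simp [_root_.blockDiag, Jone, Jtwo, Matrix.mul_apply, Matrix.add_apply, ite_mul, one_mul,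
        zero_mul, mul_ite, mul_one, mul_zero, Finset.sum_ite_eq', cne, nce, natAdd_inj_iff]

lemma J1tJ1' (r m : ℕ) {p : Type*} [Fintype p] (X : Matrix (Fin (2*r)) p ℝ) :
    (Jone r m)ᵀ * (Jone r m * X) = X := by
  rw [← Matrix.mul_assoc, J1tJ1, Matrix.one_mul]

lemma J2tJ2' (r m : ℕ) {p : Type*} [Fintype p] (X : Matrix (Fin m) p ℝ) :
    (Jtwo r m)ᵀ * (Jtwo r m * X) = X := by
  rw [← Matrix.mul_assoc, J2tJ2, Matrix.one_mul]

lemma J1tJ2' (r m : ℕ) {p : Type*} [Fintype p] (X : Matrix (Fin m) p ℝ) :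
    (Jone r m)ᵀ * (Jtwo r m * X) = 0 := by
  rw [← Matrix.mul_assoc, J1tJ2, Matrix.zero_mul]

lemma J2tJ1' (r m : ℕ) {p : Type*} [Fintype p] (X : Matrix (Fin (2*r)) p ℝ) :
    (Jtwo r m)ᵀ * (Jone r m * X) = 0 := by
  rw [← Matrix.mul_assoc, J2tJ1, Matrix.zero_mul]

lemma main_alg (r m : ℕ)
    (U Vl V0 : Matrix (Fin (2*r+m)) (Fin (2*r+m)) ℝ) (hVl : Vlᵀ * Vl = 1)
    (A C : Matrix (Fin (2*r)) (Fin (2*r)) ℝ) (ρ p : ℝ) :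
    (U * blockDiag r m A (ρ • 1) * Vlᵀ) *
      (Vl * Jone r m * C * (V0 * Jone r m)ᵀ + p • (Vl * Jtwo r m * (V0 * Jtwo r m)ᵀ))
    = U * Jone r m * (A * C) * (V0 * Jone r m)ᵀ
      + (ρ * p) • (U * Jtwo r m * (V0 * Jtwo r m)ᵀ) := by
  have haux : ∀ {q : Type} [Fintype q] (X : Matrix (Fin (2*r+m)) q ℝ),
      Vlᵀ * (Vl * X) = X := by
    intro q _ X; rw [← Matrix.mul_assoc, hVl, Matrix.one_mul]
  rw [blockDiag_eq]
  simp only [Matrix.mul_add, Matrix.add_mul, Matrix.mul_assoc, Matrix.mul_smul,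
    Matrix.smul_mul, Matrix.one_mul, smul_smul, haux, J1tJ1', J1tJ2', J2tJ1', J2tJ2',
    Matrix.mul_zero, Matrix.zero_mul, smul_zero, add_zero, zero_add, mul_comm]

lemma base_alg (r m : ℕ)
    (U V : Matrix (Fin (2*r+m)) (Fin (2*r+m)) ℝ)
    (A : Matrix (Fin (2*r)) (Fin (2*r)) ℝ) (ρ : ℝ) :
    U * blockDiag r m A (ρ • 1) * Vᵀ
    = U * Jone r m * A * (V * Jone r m)ᵀ + ρ • (U * Jtwo r m * (V * Jtwo r m)ᵀ) := by
  rw [blockDiag_eq]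
  simp only [Matrix.mul_add, Matrix.add_mul, Matrix.mul_assoc, Matrix.mul_smul,
    Matrix.smul_mul, Matrix.one_mul, Matrix.transpose_mul]

/-- the end-to-end product formula for a block-decomposed family:
`W_{j:i} = U_{j,1}·W̃_{j:i}·V_{i,1}ᵀ + (∏_{k=i}^j ρ_k)·U_{j,2}·V_{i,2}ᵀ`. -/
theorem statement8
    (r m : ℕ) (hm : 0 < m) (L : ℕ) (hL : 1 ≤ L)
    (U V : ℕ → Matrix (Fin (2*r + m)) (Fin (2*r + m)) ℝ)
    (hU : ∀ l, 1 ≤ l → l ≤ L → (U l)ᵀ * U l = 1 ∧ U l * (U l)ᵀ = 1)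
    (hV : ∀ l, 1 ≤ l → l ≤ L → (V l)ᵀ * V l = 1 ∧ V l * (V l)ᵀ = 1)
    (hUV : ∀ l, 1 ≤ l → l + 1 ≤ L → V (l+1) = U l)
    (W : ℕ → Matrix (Fin (2*r + m)) (Fin (2*r + m)) ℝ)
    (Wtil : ℕ → Matrix (Fin (2*r)) (Fin (2*r)) ℝ) (ρ : ℕ → ℝ)
    (hW : ∀ l, 1 ≤ l → l ≤ L → W l = U l * blockDiag r m (Wtil l) (ρ l • 1) * (V l)ᵀ) :
    ∀ i j, 1 ≤ i → i ≤ j → j ≤ L →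
      chain W i j
        = cols1 r m (U j) * chain Wtil i j * (cols1 r m (V i))ᵀ
          + (∏ k ∈ Finset.Icc i j, ρ k) • (cols2 r m (U j) * (cols2 r m (V i))ᵀ) := by
  intro i j hi hij
  induction j, hij using Nat.le_induction with
  | base =>
    intro hiL
    rw [chain_self, chain_self, hW i hi hiL, Finset.Icc_self, Finset.prod_singleton]
    simp only [cols1_eq, cols2_eq]
    exact base_alg r m (U i) (V i) (Wtil i) (ρ i)
  | succ j hij ih =>
    intro hjL
    have hjL' : j ≤ L := by omega
    have hij' : i ≤ j + 1 := by omega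
    rw [chain_succ W i j hij', chain_succ Wtil i j hij', ih hjL',
      hW (j+1) (by omega) hjL, hUV j (by omega) hjL,
      Finset.prod_Icc_succ_top hij']
    simp only [cols1_eq, cols2_eq]
    rw [main_alg r m (U (j+1)) (U j) (V i) (hU j (by omega) hjL').1
      (Wtil (j+1)) (chain Wtil i j) (ρ (j+1)) (∏ k ∈ Finset.Icc i j, ρ k)]
    rw [mul_comm (ρ (j+1)) (∏ k ∈ Finset.Icc i j, ρ k)]
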